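/- arXiv:1509.01519 — 4 statements merged into one kernel-verified Lean document; each statement's English description precedes it below -/
import Mathlib

section
/- Let K ⊆ R^α be any R-submodule and e ≥ 1. Then there exists a smallest submodule L ⊆ R^α such that K ⊆ L^{[p^e]}; that is, there is a submodule L with K ⊆ L^{[p^e]} and such that L ⊆ L' for every submodule L' ⊆ R^α with K ⊆ L'^{[p^e]}. -/
/-!
In characteristic `p` the map `x ↦ x ^ q`, `q = p ^ e`, is a ring endomorphism of
`R = K[x₁,…,xₙ]`, and `R` is free over its image `R^q`, with basis the `b • x^a` where `b` runs
over a basis of `K` over `K^q` and `0 ≤ aᵢ < q`. Writing a vector uniquely as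
`w = ∑ⱼ mⱼ • (wⱼ)^{[q]}` over such a basis `(mⱼ)`, one finds `w ∈ L^{[q]}` iff every `wⱼ ∈ L`.
So bracket powers commute with arbitrary intersections, and the intersection of all `L'` with
`K' ⊆ L'^{[q]}` is the smallest of them.
-/

/-- The bracket power `L^{[q]}` of a submodule `L ⊆ T^α`: the submodule generated by the
entrywise `q`-th powers `v^{[q]}` of the vectors `v ∈ L`. -/
def bracketPower {T : Type*} [CommRing T] {α : ℕ}
    (q : ℕ) (L : Submodule T (Fin α → T)) : Submodule T (Fin α → T) :=
  Submodule.span T ((fun v : Fin α → T => fun i => (v i) ^ q) '' (L : Set (Fin α → T)))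

section FrobeniusBasis

variable {T : Type*} [CommSemiring T] (p e : ℕ) [ExpChar T p] {ι : Type*}

noncomputable def frobeniusCombination (m : ι → T) : (ι →₀ T) →+ T :=
  Finsupp.liftAddHom fun j => (AddMonoidHom.mulLeft (m j)).comp (iterateFrobenius T p e)

theorem frobeniusCombination_apply (m : ι → T) (c : ι →₀ T) :
    frobeniusCombination p e m c = c.sum fun j x => m j * x ^ p ^ e :=
  rfl

theorem frobeniusCombination_single (m : ι → T) (j : ι) (x : T) :
    frobeniusCombination p e m (Finsupp.single j x) = m j * x ^ p ^ e := by
  rw [frobeniusCombination_apply,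
    Finsupp.sum_single_index (by simp [zero_pow (expChar_pow_pos T p e).ne'])]

/-- `m` is a basis of `T` as a module over itself through the `p ^ e`-th power map. -/
def IsFrobeniusBasis (m : ι → T) : Prop :=
  Function.Bijective (frobeniusCombination p e m)

namespace IsFrobeniusBasis

variable {p e} {m : ι → T} (hm : IsFrobeniusBasis p e m)
include hm

noncomputable def repr : T ≃+ (ι →₀ T) :=
  (AddEquiv.ofBijective (frobeniusCombination p e m) hm).symm

theorem frobeniusCombination_repr (x : T) : frobeniusCombination p e m (hm.repr x) = x :=
  (AddEquiv.ofBijective _ hm).apply_symm_apply x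

theorem repr_frobeniusCombination (c : ι →₀ T) : hm.repr (frobeniusCombination p e m c) = c :=
  (AddEquiv.ofBijective _ hm).symm_apply_apply c

theorem repr_mul_pow (r x : T) (j : ι) : hm.repr (r * x ^ p ^ e) j = hm.repr r j * x := by
  have : r * x ^ p ^ e =
      frobeniusCombination p e m ((hm.repr r).mapRange (· * x) (zero_mul x)) := by
    conv_lhs => rw [← hm.frobeniusCombination_repr r]
    rw [frobeniusCombination_apply, frobeniusCombination_apply, Finsupp.sum_mul,
      Finsupp.sum_mapRange_index (fun j => by simp [zero_pow (expChar_pow_pos T p e).ne'])]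
    simp only [mul_pow, mul_assoc]
  rw [this, hm.repr_frobeniusCombination, Finsupp.mapRange_apply]

end IsFrobeniusBasis

end FrobeniusBasis

section BracketPower

variable {T : Type*} [CommRing T] {p e : ℕ} [ExpChar T p] {ι : Type*} {m : ι → T}
  (hm : IsFrobeniusBasis p e m) {α : ℕ}
include hm

namespace IsFrobeniusBasis

theorem exists_sum_smul_bracket_repr (w : Fin α → T) :
    ∃ s : Finset ι, ∑ j ∈ s, m j • (fun i => hm.repr (w i) j ^ p ^ e) = w := by
  classical
  refine ⟨Finset.univ.biUnion fun i => (hm.repr (w i)).support, funext fun i => ?_⟩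
  simp only [Finset.sum_apply, Pi.smul_apply, smul_eq_mul]
  conv_rhs => rw [← hm.frobeniusCombination_repr (w i), frobeniusCombination_apply]
  exact (Finsupp.sum_of_support_subset _
    (Finset.subset_biUnion_of_mem (fun i => (hm.repr (w i)).support) (Finset.mem_univ i))
    (fun j x => m j * x ^ p ^ e) fun j _ => by simp [zero_pow (expChar_pow_pos T p e).ne']).symm

theorem mem_bracketPower_iff {L : Submodule T (Fin α → T)} {w : Fin α → T} :
    w ∈ bracketPower (p ^ e) L ↔ ∀ j, (fun i => hm.repr (w i) j) ∈ L := by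
  constructor
  · intro hw j
    obtain ⟨k, r, v, rfl⟩ := Submodule.mem_span_set'.mp hw
    have hterm : ∀ t, (fun i => hm.repr ((r t • (v t : Fin α → T)) i) j) ∈ L := by
      intro t
      obtain ⟨u, hu, hvu⟩ := (v t).2
      simp only [← hvu, Pi.smul_apply, smul_eq_mul, hm.repr_mul_pow]
      exact L.smul_mem _ hu
    convert L.sum_mem fun t (_ : t ∈ Finset.univ) => hterm t using 1
    ext i
    simp only [Finset.sum_apply, map_sum, Finsupp.finsetSum_apply]
  · intro hw
    obtain ⟨s, hs⟩ := hm.exists_sum_smul_bracket_repr w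
    rw [← hs]
    exact Submodule.sum_mem _ fun j _ =>
      Submodule.smul_mem _ _ (Submodule.subset_span ⟨_, hw j, rfl⟩)

theorem bracketPower_sInf (S : Set (Submodule T (Fin α → T))) :
    bracketPower (p ^ e) (sInf S) = ⨅ L ∈ S, bracketPower (p ^ e) L := by
  ext w
  simp only [Submodule.mem_iInf, hm.mem_bracketPower_iff, Submodule.mem_sInf]
  exact ⟨fun h L hL j => h j L hL, fun h j L hL => h L hL j⟩

theorem isLeast_sInf_bracketPower (K' : Submodule T (Fin α → T)) :
    IsLeast {L | K' ≤ bracketPower (p ^ e) L} (sInf {L | K' ≤ bracketPower (p ^ e) L}) :=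
  ⟨show K' ≤ _ by rw [hm.bracketPower_sInf]; exact le_iInf₂ fun _ h => h, fun _ h => sInf_le h⟩

end IsFrobeniusBasis

end BracketPower

theorem Module.Basis.isFrobeniusBasis (p e : ℕ) {K : Type*} [Field K] [ExpChar K p] {ι : Type*}
    (B : Module.Basis ι (iterateFrobenius K p e).fieldRange K) : IsFrobeniusBasis p e B := by
  unfold IsFrobeniusBasis
  convert B.repr.symm.bijective.comp (Finsupp.mapRange.addEquiv
    (iterateFrobenius K p e).rangeRestrictFieldEquiv.toAddEquiv).bijective using 1
  ext c
  simp [frobeniusCombination_apply, Module.Basis.repr_symm_apply, Finsupp.linearCombination_apply,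
    Finsupp.sum_mapRange_index, Subfield.smul_def, iterateFrobenius_def, mul_comm]

theorem Finsupp.exists_lt_add_smul_eq {σ : Type*} {q : ℕ} (hq : 0 < q) (d : σ →₀ ℕ) :
    ∃ r d' : σ →₀ ℕ, (∀ i, r i < q) ∧ r + q • d' = d :=
  ⟨d.mapRange (· % q) (Nat.zero_mod q), d.mapRange (· / q) (Nat.zero_div q),
    fun i => Nat.mod_lt (d i) hq, by ext i; simp [Nat.mod_add_div]⟩

namespace MvPolynomial

variable {R σ : Type*} [CommSemiring R] {p e : ℕ} [ExpChar R p]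

variable (p e) in
theorem coeff_add_smul_monomial_mul_pow (a d : σ →₀ ℕ) (c : R) (f : MvPolynomial σ R) :
    coeff (a + p ^ e • d) (monomial a c * f ^ p ^ e) = c * coeff d f ^ p ^ e := by
  rw [coeff_monomial_mul', if_pos le_self_add, add_tsub_cancel_left,
    ← map_iterateFrobenius_expand, coeff_map, coeff_expand_smul _ (expChar_pow_pos R p e).ne',
    iterateFrobenius_def]

theorem coeff_add_smul_monomial_mul_pow_of_ne {a a₀ : σ →₀ ℕ} (ha : ∀ i, a i < p ^ e)
    (ha₀ : ∀ i, a₀ i < p ^ e) (h : a ≠ a₀) (c : R) (f : MvPolynomial σ R) (d : σ →₀ ℕ) :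
    coeff (a₀ + p ^ e • d) (monomial a c * f ^ p ^ e) = 0 := by
  rw [coeff_monomial_mul']
  split_ifs with hle
  · obtain ⟨i, hi⟩ : ∃ i, a i ≠ a₀ i := by
      by_contra! h'
      exact h (Finsupp.ext h')
    rw [← map_iterateFrobenius_expand, coeff_map, coeff_expand_of_not_dvd (i := i), map_zero,
      mul_zero]
    have hle_i : a i ≤ a₀ i + p ^ e * d i := by simpa using hle i
    rw [Finsupp.tsub_apply, Finsupp.add_apply, Finsupp.smul_apply, smul_eq_mul,
      ← Nat.modEq_iff_dvd' hle_i]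
    intro hmod
    rw [Nat.ModEq, Nat.add_mul_mod_self_left, Nat.mod_eq_of_lt (ha i),
      Nat.mod_eq_of_lt (ha₀ i)] at hmod
    exact hi hmod
  · rfl

end MvPolynomial

namespace IsFrobeniusBasis
open MvPolynomial

variable {p e : ℕ} {ι R σ : Type*} [CommSemiring R] [ExpChar R p] {m : ι → R}

theorem coeff_frobeniusCombination_monomial (a₀ : {a : σ →₀ ℕ // ∀ i, a i < p ^ e})
    (d : σ →₀ ℕ) (g : ι × {a : σ →₀ ℕ // ∀ i, a i < p ^ e} →₀ MvPolynomial σ R) :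
    coeff (a₀.1 + p ^ e • d)
        (frobeniusCombination p e (fun j => monomial j.2.1 (m j.1)) g) =
      frobeniusCombination p e m
        ((g.comapDomain (·, a₀) (Prod.mk_left_injective a₀).injOn).mapRange (coeff d)
          (coeff_zero d)) := by
  suffices (coeffAddMonoidHom _).comp (frobeniusCombination p e fun j => monomial j.2.1 (m j.1)) =
      (frobeniusCombination p e m).comp ((Finsupp.mapRange.addMonoidHom (coeffAddMonoidHom d)).comp
        (Finsupp.comapDomain.addMonoidHom (Prod.mk_left_injective a₀))) from
    DFunLike.congr_fun this g
  refine Finsupp.addHom_ext fun ⟨j, a⟩ f => ?_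
  simp only [AddMonoidHom.comp_apply, coeffAddMonoidHom_apply, frobeniusCombination_single]
  by_cases h : a = a₀
  · subst h
    rw [coeff_add_smul_monomial_mul_pow p e]
    simp [frobeniusCombination_single]
  · have : Finsupp.comapDomain (·, a₀) (Finsupp.single (j, a) f)
        (Prod.mk_left_injective a₀).injOn = 0 := by
      ext j'
      simp [Ne.symm h]
    simp [this, coeff_add_smul_monomial_mul_pow_of_ne a.2 a₀.2 (Subtype.coe_ne_coe.mpr h)]

theorem mvPolynomial (hm : IsFrobeniusBasis p e m) :
    IsFrobeniusBasis p e
      fun j : ι × {a : σ →₀ ℕ // ∀ i, a i < p ^ e} => monomial j.2.1 (m j.1) := by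
  constructor
  · intro g g' hgg'
    ext ⟨j, a₀⟩ d
    have hslice := congrArg (coeff (a₀.1 + p ^ e • d)) hgg'
    simp only [coeff_frobeniusCombination_monomial] at hslice
    simpa using DFunLike.congr_fun (hm.1 hslice) j
  · intro f
    change f ∈ AddMonoidHom.mrange _
    induction f using MvPolynomial.induction_on' with
    | add f₁ f₂ h₁ h₂ => exact add_mem h₁ h₂
    | monomial d c =>
      obtain ⟨r, d', hr, rfl⟩ := Finsupp.exists_lt_add_smul_eq (expChar_pow_pos R p e) d
      rw [← hm.frobeniusCombination_repr c, frobeniusCombination_apply, map_finsuppSum,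
        Finsupp.sum]
      refine sum_mem fun j _ =>
        ⟨Finsupp.single (j, ⟨r, hr⟩) (monomial d' (hm.repr c j)), ?_⟩
      rw [frobeniusCombination_single, monomial_pow, monomial_mul]

end IsFrobeniusBasis

theorem exists_smallest_bracketPower_root_general
    {K : Type*} [Field K] {p n α : ℕ} (hp : p.Prime) [CharP K p]
    (e : ℕ)
    (K' : Submodule (MvPolynomial (Fin n) K) (Fin α → MvPolynomial (Fin n) K)) :
    ∃ L : Submodule (MvPolynomial (Fin n) K) (Fin α → MvPolynomial (Fin n) K),
      IsLeast {L' : Submodule (MvPolynomial (Fin n) K) (Fin α → MvPolynomial (Fin n) K) |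
        K' ≤ bracketPower (p ^ e) L'} L := by
  have : Fact p.Prime := ⟨hp⟩
  exact ⟨_, ((Module.Basis.ofVectorSpace _ K).isFrobeniusBasis p e).mvPolynomial
    |>.isLeast_sInf_bracketPower K'⟩

/-- Let `R = K[x₁,…,xₙ]` be a polynomial ring over a field `K` of prime
characteristic `p`, and let `K' ⊆ R^α` be a submodule and `e ≥ 1`.  Then there is a smallest
submodule `L ⊆ R^α` with `K' ⊆ L^{[p^e]}`: that is, some `L` satisfies `K' ⊆ L^{[p^e]}` and
`L ⊆ L'` for every submodule `L'` with `K' ⊆ L'^{[p^e]}`. -/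
theorem exists_smallest_bracketPower_root
    {K : Type*} [Field K] {p n α : ℕ} (hp : p.Prime) [CharP K p]
    (e : ℕ) (he : 1 ≤ e)
    (K' : Submodule (MvPolynomial (Fin n) K) (Fin α → MvPolynomial (Fin n) K)) :
    ∃ L : Submodule (MvPolynomial (Fin n) K) (Fin α → MvPolynomial (Fin n) K),
      IsLeast {L' : Submodule (MvPolynomial (Fin n) K) (Fin α → MvPolynomial (Fin n) K) |
        K' ≤ bracketPower (p ^ e) L'} L :=
  exists_smallest_bracketPower_root_general hp e K'
end

section
/- For every family {L_λ}_{λ∈Λ} of R-submodules of R^α (Λ an arbitrary index set) and every e ≥ 0, the bracket power of the intersection equals the intersection of the bracket powers: (⋂_{λ∈Λ} L_λ)^{[p^e]} = ⋂_{λ∈Λ} (L_λ)^{[p^e]}. -/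
open MvPolynomial

/-- A dual basis, in the sense of the dual basis lemma for projective modules, of `R` as a module
over `R` acting through `g • f = g ^ q * f`. -/
structure FrobeniusDualBasis (R : Type*) [CommRing R] (q : ℕ) (ι : Type*) where
  coord : R →+ (ι →₀ R)
  vec : ι → R
  coord_pow_mul (g f : R) : coord (g ^ q * f) = g • coord f
  sum_coord (f : R) : (coord f).sum (fun i c => c ^ q * vec i) = f

namespace FrobeniusDualBasis

variable {R : Type*} [CommRing R] {q : ℕ} {ι : Type*} {α : ℕ}

theorem coord_mem_of_mem_bracketPower (D : FrobeniusDualBasis R q ι)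
    {L : Submodule R (Fin α → R)} {v : Fin α → R} (hv : v ∈ bracketPower q L) (i : ι) :
    (fun t => D.coord (v t) i) ∈ L := by
  -- Strengthened to all multiples `r • v`, so that the `smul` case of the induction goes through.
  suffices ∀ r, (fun t => D.coord (r * v t) i) ∈ L by simpa using this 1
  induction hv using Submodule.span_induction with
  | mem x hx =>
    obtain ⟨w, hw, rfl⟩ := hx
    intro r
    convert L.smul_mem (D.coord r i) hw using 1
    funext t
    rw [mul_comm r, D.coord_pow_mul, Finsupp.smul_apply, Pi.smul_apply, smul_eq_mul,
      smul_eq_mul, mul_comm]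
  | zero =>
    intro r
    simp only [Pi.zero_apply, mul_zero, map_zero, Finsupp.coe_zero]
    exact L.zero_mem
  | add x y _ _ hx hy =>
    intro r
    convert L.add_mem (hx r) (hy r) using 1
    funext t
    simp [mul_add]
  | smul c x _ hx =>
    intro r
    simpa [mul_assoc] using hx (r * c)

theorem exists_sum_vec_smul_pow_coord (D : FrobeniusDualBasis R q ι) (hq : q ≠ 0)
    (v : Fin α → R) : ∃ s : Finset ι, ∑ i ∈ s, D.vec i • (fun t => D.coord (v t) i ^ q) = v := by
  classical
  refine ⟨Finset.univ.biUnion fun t => (D.coord (v t)).support, funext fun t => ?_⟩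
  conv_rhs => rw [← D.sum_coord (v t)]
  rw [Finset.sum_apply, Finsupp.sum_of_support_subset _
    (Finset.subset_biUnion_of_mem (fun t => (D.coord (v t)).support) (Finset.mem_univ t)) _
    (by simp [hq])]
  simp [mul_comm]

theorem bracketPower_iInf_eq (D : FrobeniusDualBasis R q ι) (hq : q ≠ 0) {Λ : Type*}
    (L : Λ → Submodule R (Fin α → R)) :
    bracketPower q (⨅ l, L l) = ⨅ l, bracketPower q (L l) := by
  refine le_antisymm (le_iInf fun l => Submodule.span_mono (Set.image_mono (iInf_le L l)))
    fun v hv => ?_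
  have hcoord (i : ι) : (fun t => D.coord (v t) i) ∈ ⨅ l, L l :=
    (Submodule.mem_iInf _).2 fun l =>
      D.coord_mem_of_mem_bracketPower ((Submodule.mem_iInf _).1 hv l) i
  obtain ⟨s, hs⟩ := D.exists_sum_vec_smul_pow_coord hq v
  rw [← hs]
  exact Submodule.sum_mem _ fun i _ =>
    Submodule.smul_mem _ _ (Submodule.subset_span ⟨_, hcoord i, rfl⟩)

end FrobeniusDualBasis

namespace Finsupp

variable {σ : Type*}

noncomputable def divNat (μ : σ →₀ ℕ) (q : ℕ) : σ →₀ ℕ := μ.mapRange (· / q) (Nat.zero_div q)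

noncomputable def modNat (μ : σ →₀ ℕ) (q : ℕ) : σ →₀ ℕ := μ.mapRange (· % q) (Nat.zero_mod q)

theorem smul_divNat_add_modNat (μ : σ →₀ ℕ) (q : ℕ) : q • μ.divNat q + μ.modNat q = μ := by
  ext i
  simp [divNat, modNat, Nat.div_add_mod]

theorem modNat_smul_add (q : ℕ) (ν μ : σ →₀ ℕ) : (q • ν + μ).modNat q = μ.modNat q := by
  ext i
  simp [modNat]

theorem divNat_smul_add {q : ℕ} (hq : 0 < q) (ν μ : σ →₀ ℕ) :
    (q • ν + μ).divNat q = ν + μ.divNat q := by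
  ext i
  simp [divNat, Nat.mul_add_div hq]

end Finsupp

namespace FrobeniusDualBasis

noncomputable def ofField (K : Type*) [Field K] (p : ℕ) [ExpChar K p] (e : ℕ) :
    FrobeniusDualBasis K (p ^ e)
      (Module.Basis.ofVectorSpaceIndex (iterateFrobenius K p e).fieldRange K) where
  coord := (Finsupp.mapRange.addMonoidHom
      (iterateFrobenius K p e).rangeRestrictFieldEquiv.symm.toAddMonoidHom).comp
    (Module.Basis.ofVectorSpace _ K).repr.toAddMonoidHom
  vec := Module.Basis.ofVectorSpace _ K
  coord_pow_mul g f := by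
    have h : g ^ p ^ e * f = (iterateFrobenius K p e).rangeRestrictFieldEquiv g • f := by
      simp [Subfield.smul_def, iterateFrobenius_def]
    simp only [AddMonoidHom.coe_comp, Function.comp_apply, h, Finsupp.mapRange.addMonoidHom_apply,
      LinearMap.toAddMonoidHom_coe, LinearEquiv.coe_coe, map_smul]
    exact Finsupp.mapRange_smul' _ _ _ fun s => by simp [smul_eq_mul]
  sum_coord f := by
    simp only [AddMonoidHom.coe_comp, Function.comp_apply, Finsupp.mapRange.addMonoidHom_apply,
      LinearMap.toAddMonoidHom_coe, LinearEquiv.coe_coe]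
    rw [Finsupp.sum_mapRange_index fun _ => by rw [zero_pow (expChar_pow_pos K p e).ne', zero_mul]]
    set b := Module.Basis.ofVectorSpace (iterateFrobenius K p e).fieldRange K
    conv_rhs => rw [← b.linearCombination_repr f, Finsupp.linearCombination_apply]
    refine Finsupp.sum_congr fun j _ => ?_
    simp [← iterateFrobenius_def, Subfield.smul_def]

section MvPolynomial

variable {K : Type*} [CommRing K] {p e : ℕ} {J : Type*}
  (D : FrobeniusDualBasis K (p ^ e) J) {σ : Type*}

variable (σ) in
noncomputable def mvPolynomialCoord :
    MvPolynomial σ K →+ ((σ →₀ ℕ) × J →₀ MvPolynomial σ K) :=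
  (Finsupp.liftAddHom fun μ =>
    (Finsupp.mapDomain.addMonoidHom (Prod.mk (μ.modNat (p ^ e)))).comp
      ((Finsupp.mapRange.addMonoidHom (monomial (μ.divNat (p ^ e))).toAddMonoidHom).comp
        D.coord)).comp
    AddMonoidAlgebra.coeffAddEquiv.toAddMonoidHom

theorem mvPolynomialCoord_monomial (μ : σ →₀ ℕ) (a : K) :
    D.mvPolynomialCoord σ (monomial μ a) = Finsupp.mapDomain (Prod.mk (μ.modNat (p ^ e)))
      ((D.coord a).mapRange (monomial (μ.divNat (p ^ e))) (map_zero _)) :=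
  Finsupp.liftAddHom_apply_single _ _ _

theorem mvPolynomialCoord_pow_mul [ExpChar K p] (g f : MvPolynomial σ K) :
    D.mvPolynomialCoord σ (g ^ p ^ e * f) = g • D.mvPolynomialCoord σ f := by
  induction f using MvPolynomial.induction_on' with
  | add f₁ f₂ h₁ h₂ => rw [mul_add, map_add, map_add, h₁, h₂, smul_add]
  | monomial μ a =>
    induction g using MvPolynomial.induction_on' with
    | add g₁ g₂ h₁ h₂ => rw [add_pow_expChar_pow, add_mul, map_add, h₁, h₂, add_smul]
    | monomial ν b =>
      rw [monomial_pow, monomial_mul, mvPolynomialCoord_monomial, mvPolynomialCoord_monomial,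
        Finsupp.modNat_smul_add, Finsupp.divNat_smul_add (expChar_pow_pos K p e),
        D.coord_pow_mul, ← Finsupp.mapDomain_smul]
      congr 1
      ext j
      simp [monomial_mul]

theorem sum_mvPolynomialCoord [ExpChar K p] (f : MvPolynomial σ K) :
    (D.mvPolynomialCoord σ f).sum (fun i c => c ^ p ^ e * monomial i.1 (D.vec i.2)) = f := by
  have h₀ (i : (σ →₀ ℕ) × J) : (0 : MvPolynomial σ K) ^ p ^ e * monomial i.1 (D.vec i.2) = 0 := by
    rw [zero_pow (expChar_pow_pos K p e).ne', zero_mul]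
  have hadd (i : (σ →₀ ℕ) × J) (c₁ c₂ : MvPolynomial σ K) :
      (c₁ + c₂) ^ p ^ e * monomial i.1 (D.vec i.2) =
        c₁ ^ p ^ e * monomial i.1 (D.vec i.2) + c₂ ^ p ^ e * monomial i.1 (D.vec i.2) := by
    rw [add_pow_expChar_pow, add_mul]
  induction f using MvPolynomial.induction_on' with
  | add f₁ f₂ h₁ h₂ => rw [map_add, Finsupp.sum_add_index' h₀ hadd, h₁, h₂]
  | monomial μ a =>
    rw [mvPolynomialCoord_monomial, Finsupp.sum_mapDomain_index h₀ hadd,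
      Finsupp.sum_mapRange_index fun _ => h₀ _]
    conv_rhs => rw [← D.sum_coord a, map_finsuppSum]
    refine Finsupp.sum_congr fun j _ => ?_
    rw [monomial_pow, monomial_mul, Finsupp.smul_divNat_add_modNat]

variable (σ) in
noncomputable def mvPolynomial [ExpChar K p] :
    FrobeniusDualBasis (MvPolynomial σ K) (p ^ e) ((σ →₀ ℕ) × J) where
  coord := D.mvPolynomialCoord σ
  vec i := monomial i.1 (D.vec i.2)
  coord_pow_mul := D.mvPolynomialCoord_pow_mul
  sum_coord := D.sum_mvPolynomialCoord

end MvPolynomial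

end FrobeniusDualBasis

/-- Over `R = K[x₁,…,xₙ]` with `K` a field of prime characteristic `p`,
for every family `{L_λ}_{λ ∈ Λ}` of submodules of `R^α` and every `e ≥ 0`, the bracket power
of the intersection equals the intersection of the bracket powers:
`(⋂_λ L_λ)^{[p^e]} = ⋂_λ (L_λ)^{[p^e]}`. -/
theorem bracketPower_iInf
    {K : Type*} [Field K] {p n α : ℕ} (hp : p.Prime) [CharP K p]
    (Λ : Type*) (L : Λ → Submodule (MvPolynomial (Fin n) K) (Fin α → MvPolynomial (Fin n) K))
    (e : ℕ) :
    bracketPower (p ^ e) (⨅ l : Λ, L l) = ⨅ l : Λ, bracketPower (p ^ e) (L l) := by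
  have : ExpChar K p := ExpChar.prime hp
  exact ((FrobeniusDualBasis.ofField K p e).mvPolynomial (Fin n)).bracketPower_iInf_eq
    (pow_ne_zero e hp.ne_zero) L
end

section
/- Fix e ≥ 1 and q = p^e, and let v ∈ R^α. Suppose v = Σ_a (u_a)^{[q]}·x^a, a finite sum over exponent vectors a = (a₁,…,aₙ) with 0 ≤ a_i < q for all i, where each u_a ∈ R^α and x^a denotes the corresponding monomial (such an expression exists and is unique, since the monomials x^a with all exponents < q form a free basis of R over its subring of q-th powers). Then the R-submodule of R^α generated by {u_a} is the smallest submodule W ⊆ R^α such that v ∈ W^{[q]}. -/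
open MvPolynomial

namespace MvPolynomial

variable {σ R : Type*} [CommSemiring R]

section DigitExponent

variable {q : ℕ}

noncomputable def digitExponent [Finite σ] (a : σ → Fin q) : σ →₀ ℕ :=
  Finsupp.equivFunOnFinite.symm fun i => a i

@[simp]
theorem digitExponent_apply [Finite σ] (a : σ → Fin q) (i : σ) : digitExponent a i = a i := rfl

theorem prod_X_pow_eq_monomial_digitExponent [Fintype σ] (a : σ → Fin q) :
    ∏ i, (X i : MvPolynomial σ R) ^ (a i : ℕ) = monomial (digitExponent a) 1 := by
  rw [← prod_X_pow_eq_monomial]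
  exact (Finset.prod_subset (Finset.subset_univ _) fun i _ hi => by
    rw [show (a i : ℕ) = 0 from Finsupp.notMem_support_iff.mp hi, pow_zero]).symm

variable [NeZero q] [Finite σ]

@[simp]
theorem digitExponent_zero : digitExponent (0 : σ → Fin q) = 0 := by
  ext
  simp

theorem nsmul_add_digitExponent_inj {b b' : σ →₀ ℕ} {a a' : σ → Fin q} :
    q • b + digitExponent a = q • b' + digitExponent a' ↔ b = b' ∧ a = a' := by
  refine ⟨fun h => ?_, by rintro ⟨rfl, rfl⟩; rfl⟩
  have hi (i : σ) : q * b i + (a i : ℕ) = q * b' i + (a' i : ℕ) := by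
    simpa using DFunLike.congr_fun h i
  constructor
  · ext i
    simpa [Nat.mul_add_div (NeZero.pos q), Nat.div_eq_of_lt] using congrArg (· / q) (hi i)
  · ext i
    simpa [Nat.mul_add_mod, Nat.mod_eq_of_lt] using congrArg (· % q) (hi i)

theorem exists_nsmul_add_digitExponent (m : σ →₀ ℕ) :
    ∃ (b : σ →₀ ℕ) (a : σ → Fin q), q • b + digitExponent a = m :=
  ⟨Finsupp.equivFunOnFinite.symm fun i => m i / q,
    fun i => ⟨m i % q, Nat.mod_lt _ (NeZero.pos q)⟩, Finsupp.ext fun i => Nat.div_add_mod (m i) q⟩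

end DigitExponent

section FrobeniusCoeff

variable (q : ℕ) [NeZero q]

noncomputable def frobeniusCoeff (a : σ →₀ ℕ) : MvPolynomial σ R →+ MvPolynomial σ R :=
  AddMonoidAlgebra.coeffAddEquiv.symm.toAddMonoidHom.comp <|
    (Finsupp.comapDomain.addMonoidHom
      ((add_left_injective a).comp (smul_right_injective _ (NeZero.ne q)))).comp
      AddMonoidAlgebra.coeffAddEquiv.toAddMonoidHom

variable {q}

@[simp]
theorem coeff_frobeniusCoeff (a b : σ →₀ ℕ) (f : MvPolynomial σ R) :
    coeff b (frobeniusCoeff q a f) = coeff (q • b + a) f := rfl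

variable [Finite σ]

open Classical in
theorem frobeniusCoeff_monomial_nsmul_add_digitExponent (a a' : σ → Fin q) (b : σ →₀ ℕ)
    (c : R) :
    frobeniusCoeff q (digitExponent a) (monomial (q • b + digitExponent a') c)
      = if a' = a then monomial b c else 0 := by
  ext b'
  split_ifs with h <;>
    simp [coeff_monomial, nsmul_add_digitExponent_inj, smul_right_inj (NeZero.ne q), h]

open Classical in
theorem frobeniusCoeff_monomial_digitExponent (a a' : σ → Fin q) (c : R) :
    frobeniusCoeff q (digitExponent a) (monomial (digitExponent a') c)
      = if a' = a then C c else 0 := by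
  simpa using frobeniusCoeff_monomial_nsmul_add_digitExponent a a' 0 c

theorem frobeniusCoeff_monomial_nsmul_mul (a : σ → Fin q) (m : σ →₀ ℕ) (c : R)
    (f : MvPolynomial σ R) :
    frobeniusCoeff q (digitExponent a) (monomial (q • m) c * f)
      = monomial m c * frobeniusCoeff q (digitExponent a) f := by
  ext b
  have hle : q • m ≤ q • b + digitExponent a ↔ m ≤ b := by
    simp only [Finsupp.le_def, Finsupp.add_apply, Finsupp.smul_apply, smul_eq_mul,
      digitExponent_apply]
    refine forall_congr' fun i => ⟨fun h => ?_, fun h => ?_⟩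
    · exact Nat.le_of_lt_succ <| Nat.lt_of_mul_lt_mul_left (a := q) <| by
        rw [Nat.mul_succ]; exact h.trans_lt (Nat.add_lt_add_left (a i).isLt _)
    · exact (Nat.mul_le_mul_left q h).trans (Nat.le_add_right _ _)
  rw [coeff_frobeniusCoeff, coeff_monomial_mul', coeff_monomial_mul']
  by_cases h : m ≤ b
  · rw [if_pos (hle.2 h), if_pos h, coeff_frobeniusCoeff]
    congr 2
    ext i
    simp only [Finsupp.tsub_apply, Finsupp.add_apply, Finsupp.smul_apply, smul_eq_mul]
    rw [Nat.mul_sub, Nat.sub_add_comm (Nat.mul_le_mul_left q (h i))]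
  · rw [if_neg (mt hle.1 h), if_neg h]

end FrobeniusCoeff

section CharP

variable {K : Type*} [CommSemiring K] {p : ℕ} [Fact p.Prime] [CharP K p] {e : ℕ}

theorem frobeniusCoeff_pow_mul [Finite σ] (hK : ∀ c : K, c ^ p ^ e = c) (a : σ → Fin (p ^ e))
    (g f : MvPolynomial σ K) :
    frobeniusCoeff (p ^ e) (digitExponent a) (g ^ p ^ e * f)
      = g * frobeniusCoeff (p ^ e) (digitExponent a) f := by
  induction g using MvPolynomial.induction_on' with
  | monomial m c => rw [monomial_pow, hK, frobeniusCoeff_monomial_nsmul_mul]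
  | add g₁ g₂ ih₁ ih₂ => rw [add_pow_char_pow, add_mul, map_add, ih₁, ih₂, add_mul]

open Classical in
theorem frobeniusCoeff_pow [Finite σ] (hK : ∀ c : K, c ^ p ^ e = c) (a : σ → Fin (p ^ e))
    (g : MvPolynomial σ K) :
    frobeniusCoeff (p ^ e) (digitExponent a) (g ^ p ^ e) = if a = 0 then g else 0 := by
  rw [← mul_one (g ^ p ^ e), frobeniusCoeff_pow_mul hK, one_def,
    ← digitExponent_zero (q := p ^ e), frobeniusCoeff_monomial_digitExponent]
  simp [eq_comm (a := (0 : σ → Fin (p ^ e)))]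

variable [Fintype σ] [DecidableEq σ]

theorem sum_frobeniusCoeff_pow_mul_monomial (hK : ∀ c : K, c ^ p ^ e = c)
    (f : MvPolynomial σ K) :
    ∑ a : σ → Fin (p ^ e),
      frobeniusCoeff (p ^ e) (digitExponent a) f ^ p ^ e * monomial (digitExponent a) 1 = f := by
  induction f using MvPolynomial.induction_on' with
  | monomial m c =>
    obtain ⟨b, a, rfl⟩ := exists_nsmul_add_digitExponent (q := p ^ e) m
    simp only [frobeniusCoeff_monomial_nsmul_add_digitExponent, ite_pow, zero_pow (NeZero.ne _),
      ite_mul, zero_mul, Finset.sum_ite_eq, Finset.mem_univ, if_true]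
    rw [monomial_pow, hK, monomial_mul, mul_one]
  | add f₁ f₂ ih₁ ih₂ =>
    simp only [map_add, add_pow_char_pow, add_mul, Finset.sum_add_distrib, ih₁, ih₂]

theorem frobeniusCoeff_sum_pow_mul_monomial (hK : ∀ c : K, c ^ p ^ e = c)
    (u : (σ → Fin (p ^ e)) → MvPolynomial σ K) (a : σ → Fin (p ^ e)) :
    frobeniusCoeff (p ^ e) (digitExponent a)
      (∑ b, u b ^ p ^ e * monomial (digitExponent b) 1) = u a := by
  simp only [map_sum, frobeniusCoeff_pow_mul hK, frobeniusCoeff_monomial_digitExponent, mul_ite,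
    mul_zero, Finset.sum_ite_eq', Finset.mem_univ, if_true, C_1, mul_one]

theorem frobeniusCoeff_mul (hK : ∀ c : K, c ^ p ^ e = c) (a : σ → Fin (p ^ e))
    (r f : MvPolynomial σ K) :
    frobeniusCoeff (p ^ e) (digitExponent a) (r * f)
      = ∑ b : σ → Fin (p ^ e),
          frobeniusCoeff (p ^ e) (digitExponent a) (r * monomial (digitExponent b) 1)
            * frobeniusCoeff (p ^ e) (digitExponent b) f := by
  conv_lhs => rw [← sum_frobeniusCoeff_pow_mul_monomial hK f, Finset.mul_sum, map_sum]
  refine Finset.sum_congr rfl fun b _ => ?_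
  rw [mul_left_comm, frobeniusCoeff_pow_mul hK, mul_comm]

end CharP

end MvPolynomial

theorem pow_mem_bracketPower {T : Type*} [CommRing T] {α : ℕ} (q : ℕ)
    {L : Submodule T (Fin α → T)} {w : Fin α → T} (hw : w ∈ L) :
    (fun i => w i ^ q) ∈ bracketPower q L :=
  Submodule.subset_span ⟨w, hw, rfl⟩

theorem frobeniusCoeff_compLeft_mem_of_mem_bracketPower {σ K : Type*} [Fintype σ]
    [DecidableEq σ] [CommRing K] {p : ℕ} [Fact p.Prime] [CharP K p] {e : ℕ}
    (hK : ∀ c : K, c ^ p ^ e = c) {α : ℕ}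
    {W : Submodule (MvPolynomial σ K) (Fin α → MvPolynomial σ K)} {w : Fin α → MvPolynomial σ K}
    (hw : w ∈ bracketPower (p ^ e) W) (a : σ → Fin (p ^ e)) :
    (frobeniusCoeff (p ^ e) (digitExponent a)).compLeft (Fin α) w ∈ W := by
  induction hw using Submodule.span_induction generalizing a with
  | mem x hx =>
    obtain ⟨w, hw, rfl⟩ := hx
    classical
    have hpow : (frobeniusCoeff (p ^ e) (digitExponent a)).compLeft (Fin α) (fun j => w j ^ p ^ e)
        = if a = 0 then w else 0 := by
      funext j
      change frobeniusCoeff (p ^ e) (digitExponent a) (w j ^ p ^ e) = _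
      rw [frobeniusCoeff_pow hK]
      split_ifs <;> rfl
    rw [hpow]
    split_ifs
    · exact hw
    · exact W.zero_mem
  | zero => simpa only [map_zero] using W.zero_mem
  | add x y _ _ hx hy => simpa only [map_add] using W.add_mem (hx a) (hy a)
  | smul r x _ hx =>
    have hsum : (frobeniusCoeff (p ^ e) (digitExponent a)).compLeft (Fin α) (r • x)
        = ∑ b : σ → Fin (p ^ e),
            frobeniusCoeff (p ^ e) (digitExponent a) (r * monomial (digitExponent b) 1)
              • (frobeniusCoeff (p ^ e) (digitExponent b)).compLeft (Fin α) x := by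
      funext j
      simp only [Finset.sum_apply, Pi.smul_apply, smul_eq_mul]
      exact frobeniusCoeff_mul hK a r (x j)
    rw [hsum]
    exact W.sum_mem fun b _ => W.smul_mem _ (hx b)

theorem Ie_of_single_vector_general
    {p : ℕ} [Fact p.Prime] {n α : ℕ} (e : ℕ)
    (v : Fin α → MvPolynomial (Fin n) (ZMod p))
    (u : (Fin n → Fin (p ^ e)) → (Fin α → MvPolynomial (Fin n) (ZMod p)))
    (hv : v = ∑ a : Fin n → Fin (p ^ e),
      fun j => (u a j) ^ (p ^ e) * ∏ i, (X i : MvPolynomial (Fin n) (ZMod p)) ^ (a i : ℕ)) :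
    IsLeast {W : Submodule (MvPolynomial (Fin n) (ZMod p)) (Fin α → MvPolynomial (Fin n) (ZMod p)) |
        v ∈ bracketPower (p ^ e) W}
      (Submodule.span (MvPolynomial (Fin n) (ZMod p)) (Set.range u)) := by
  simp only [prod_X_pow_eq_monomial_digitExponent] at hv
  refine ⟨?_, fun W hW => Submodule.span_le.2 ?_⟩
  · change v ∈ bracketPower _ _
    rw [hv]
    refine Submodule.sum_mem _ fun a _ => ?_
    have hterm : (fun j => u a j ^ p ^ e * monomial (digitExponent a) 1)
        = monomial (digitExponent a) (1 : ZMod p) • fun j => u a j ^ p ^ e := by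
      funext j
      exact mul_comm _ _
    rw [hterm]
    exact Submodule.smul_mem _ _ (pow_mem_bracketPower _ (Submodule.subset_span ⟨a, rfl⟩))
  · rintro _ ⟨a, rfl⟩
    have hu : u a = (frobeniusCoeff (p ^ e) (digitExponent a)).compLeft (Fin α) v := by
      funext j
      change u a j = frobeniusCoeff (p ^ e) (digitExponent a) (v j)
      rw [hv, Finset.sum_apply]
      exact (frobeniusCoeff_sum_pow_mul_monomial ZMod.pow_card_pow (fun b => u b j) a).symm
    rw [hu]
    exact frobeniusCoeff_compLeft_mem_of_mem_bracketPower ZMod.pow_card_pow hW a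

/-- Let `R = F_p[x₁,…,xₙ]`, `e ≥ 1`, `q = p^e`, and `v ∈ R^α`.  Suppose
`v = Σ_a (u_a)^{[q]} · x^a`, the sum ranging over exponent vectors `a = (a₁,…,aₙ)` with
`0 ≤ aᵢ < q`, where `u_a ∈ R^α` and `x^a = Πᵢ xᵢ^{aᵢ}`.  Then the submodule generated by
the `u_a` is the smallest submodule `W ⊆ R^α` with `v ∈ W^{[q]}`. -/
theorem Ie_of_single_vector
    {p : ℕ} [Fact p.Prime] {n α : ℕ} (e : ℕ) (he : 1 ≤ e)
    (v : Fin α → MvPolynomial (Fin n) (ZMod p))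
    (u : (Fin n → Fin (p ^ e)) → (Fin α → MvPolynomial (Fin n) (ZMod p)))
    (hv : v = ∑ a : Fin n → Fin (p ^ e),
      fun j => (u a j) ^ (p ^ e) * ∏ i, (X i : MvPolynomial (Fin n) (ZMod p)) ^ (a i : ℕ)) :
    IsLeast {W : Submodule (MvPolynomial (Fin n) (ZMod p)) (Fin α → MvPolynomial (Fin n) (ZMod p)) |
        v ∈ bracketPower (p ^ e) W}
      (Submodule.span (MvPolynomial (Fin n) (ZMod p)) (Set.range u)) :=
  Ie_of_single_vector_general e v u hv
end

section
/- Let S ⊆ R be a multiplicative set, let R_S denote the localization of R at S, and let V ⊆ R^α be a submodule. Let L be the smallest submodule of R^α with V ⊆ L^{[p^e]} (e ≥ 1). Then the extension L·R_S (the R_S-submodule of (R_S)^α generated by the image of L) is the smallest R_S-submodule L' of (R_S)^α such that V·R_S ⊆ L'^{[p^e]}. In other words, I_e(V ⊗_R R_S) exists and equals I_e(V) ⊗_R R_S. -/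
/-- The extension `V · R_S ⊆ (R_S)^α` of a submodule `V ⊆ R^α` to the localization `R_S`:
the `R_S`-submodule generated by the image of `V` under the componentwise localization map. -/
def extendToLocalization {R : Type*} [CommRing R] (S : Submonoid R) {α : ℕ}
    (V : Submodule R (Fin α → R)) : Submodule (Localization S) (Fin α → Localization S) :=
  Submodule.span (Localization S)
    ((fun v : Fin α → R => fun i => algebraMap R (Localization S) (v i)) '' (V : Set (Fin α → R)))

section QSum
variable {T : Type*} [CommRing T] {M : Type*}

noncomputable def qSum (θ : M → T) (q : ℕ) (h : M →₀ T) : T :=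
  h.sum fun m a => θ m * a ^ q

variable {θ : M → T} {q : ℕ}

lemma qSum_zero : qSum θ q 0 = 0 := Finsupp.sum_zero_index

lemma qSum_single (hq : q ≠ 0) (m : M) (a : T) :
    qSum θ q (Finsupp.single m a) = θ m * a ^ q :=
  Finsupp.sum_single_index (by simp [zero_pow hq])

lemma qSum_add (hq : q ≠ 0) (hadd : ∀ a b : T, (a + b) ^ q = a ^ q + b ^ q)
    (h₁ h₂ : M →₀ T) : qSum θ q (h₁ + h₂) = qSum θ q h₁ + qSum θ q h₂ :=
  Finsupp.sum_add_index' (fun m => by simp [zero_pow hq])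
    (fun m a b => by rw [hadd, mul_add])

lemma qSum_sub (hq : q ≠ 0) (hadd : ∀ a b : T, (a + b) ^ q = a ^ q + b ^ q)
    (h₁ h₂ : M →₀ T) : qSum θ q (h₁ - h₂) = qSum θ q h₁ - qSum θ q h₂ := by
  have := qSum_add (θ := θ) hq hadd (h₁ - h₂) h₂
  rw [sub_add_cancel] at this
  rw [this]; ring

lemma qSum_smul (hq : q ≠ 0) (c : T) (h : M →₀ T) :
    qSum θ q (c • h) = c ^ q * qSum θ q h := by
  rw [qSum, Finsupp.sum_smul_index' (fun m => by simp [zero_pow hq]), qSum,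
    Finsupp.mul_sum]
  exact Finsupp.sum_congr fun m _ => by rw [smul_eq_mul, mul_pow]; ring

lemma qSum_finset_sum (hq : q ≠ 0) (hadd : ∀ a b : T, (a + b) ^ q = a ^ q + b ^ q)
    {ι : Type*} (s : Finset ι) (f : ι → (M →₀ T)) :
    qSum θ q (∑ k ∈ s, f k) = ∑ k ∈ s, qSum θ q (f k) := by
  classical
  induction s using Finset.cons_induction with
  | empty => simp [qSum_zero]
  | cons k s hk ih => rw [Finset.sum_cons, qSum_add hq hadd, ih, Finset.sum_cons]

end QSum

section DivMod
variable {n : ℕ}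

noncomputable def ndiv (q : ℕ) (a : Fin n →₀ ℕ) : Fin n →₀ ℕ :=
  a.mapRange (· / q) (Nat.zero_div q)

noncomputable def nmod (q : ℕ) (a : Fin n →₀ ℕ) : Fin n →₀ ℕ :=
  a.mapRange (· % q) (Nat.zero_mod q)

lemma nmod_add_smul_ndiv (q : ℕ) (a : Fin n →₀ ℕ) : nmod q a + q • ndiv q a = a := by
  ext i
  simp [nmod, ndiv, Finsupp.mapRange_apply, Nat.mod_add_div]

lemma nmod_lt {q : ℕ} (hq : q ≠ 0) (a : Fin n →₀ ℕ) (i : Fin n) : nmod q a i < q := by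
  simp only [nmod, Finsupp.mapRange_apply]
  exact Nat.mod_lt _ (Nat.pos_of_ne_zero hq)

lemma divmod_unique {q : ℕ} {r b a : Fin n →₀ ℕ} (hr : ∀ i, r i < q)
    (h : r + q • b = a) : r = nmod q a ∧ b = ndiv q a := by
  constructor <;> ext i <;>
    [skip; skip] <;>
  · have hi : r i + q * b i = a i := by
      rw [← h]; simp
    first
    | · show r i = nmod q a i
        simp only [nmod, Finsupp.mapRange_apply, ← hi, Nat.add_mul_mod_self_left]
        exact (Nat.mod_eq_of_lt (hr i)).symm
    | · show b i = ndiv q a i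
        simp only [ndiv, Finsupp.mapRange_apply, ← hi]
        rw [Nat.add_mul_div_left _ _ (Nat.pos_of_ne_zero (by
          rintro rfl; exact absurd (hr i) (by simp)))]
        simp [Nat.div_eq_of_lt (hr i)]

end DivMod

section Theta
open MvPolynomial
universe u
variable {K : Type u} [Field K] {p : ℕ} (hp : p.Prime) [CharP K p] {n : ℕ} (e : ℕ)
include hp

lemma pow_q_eq (g : MvPolynomial (Fin n) K) :
    g ^ p ^ e = ∑ b ∈ g.support, monomial (p ^ e • b) ((coeff b g) ^ p ^ e) := by
  haveI : ExpChar (MvPolynomial (Fin n) K) p := ExpChar.prime hp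
  conv_lhs => rw [g.as_sum]
  rw [sum_pow_char_pow]
  exact Finset.sum_congr rfl fun b _ => monomial_pow

lemma coeff_theta_mul (hq : p ^ e ≠ 0) {r : Fin n →₀ ℕ} (hr : ∀ i, r i < p ^ e) (k : K)
    (g : MvPolynomial (Fin n) K) (a : Fin n →₀ ℕ) :
    coeff a (monomial r k * g ^ p ^ e)
      = if r = nmod (p ^ e) a then k * (coeff (ndiv (p ^ e) a) g) ^ p ^ e else 0 := by
  classical
  rw [pow_q_eq hp, Finset.mul_sum, coeff_sum]
  have hterm : ∀ b, monomial r k * monomial (p ^ e • b) ((coeff b g) ^ p ^ e)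
      = monomial (r + p ^ e • b) (k * (coeff b g) ^ p ^ e) := fun b =>
    monomial_mul
  simp_rw [hterm, coeff_monomial]
  split_ifs with hmr
  · rw [Finset.sum_eq_single (ndiv (p ^ e) a)]
    · rw [if_pos]
      rw [hmr, nmod_add_smul_ndiv]
    · intro b _ hb
      rw [if_neg]
      intro hEq
      exact hb (divmod_unique hr hEq).2
    · intro hnot
      simp [MvPolynomial.notMem_support_iff.1 hnot, zero_pow hq]
  · refine Finset.sum_eq_zero fun b _ => ?_
    rw [if_neg]
    intro hEq
    exact hmr (divmod_unique hr hEq).1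

theorem exists_qbasis :
    ∃ (M : Type u) (θ : M → MvPolynomial (Fin n) K),
      Function.Bijective (qSum θ (p ^ e)) := by
  classical
  haveI : Fact p.Prime := ⟨hp⟩
  haveI : ExpChar K p := ExpChar.prime hp
  set q := p ^ e with hqdef
  have hq : q ≠ 0 := pow_ne_zero _ hp.pos.ne'
  have hadd : ∀ a b : MvPolynomial (Fin n) K, (a + b) ^ q = a ^ q + b ^ q := fun a b =>
    add_pow_char_pow a b p e
  set F : Subfield K := (iterateFrobenius K p e).fieldRange with hF
  set J := Module.Basis.ofVectorSpaceIndex F K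
  set bK : Module.Basis J F K := Module.Basis.ofVectorSpace F K with hbK
  have hrt : ∀ z : F, ∃ c : K, c ^ q = (z : K) := by
    rintro ⟨z, hz⟩
    obtain ⟨c, hc⟩ := RingHom.mem_fieldRange.1 hz
    exact ⟨c, by rw [← iterateFrobenius_def]; exact hc⟩
  choose rt hrtq using hrt
  have hmemF : ∀ c : K, c ^ q ∈ F := fun c =>
    RingHom.mem_fieldRange.2 ⟨c, iterateFrobenius_def p e c⟩
  have hsmul : ∀ (z : F) (k : K), z • k = (z : K) * k := fun z k => rfl
  set θ : ({r : Fin n →₀ ℕ // ∀ i, r i < q} × J) → MvPolynomial (Fin n) K :=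
    fun m => monomial m.1.1 (bK m.2 : K) with hθ
  have hθapp : ∀ m, θ m = monomial m.1.1 (bK m.2 : K) := fun _ => rfl
  refine ⟨({r : Fin n →₀ ℕ // ∀ i, r i < q} × J), θ, ?_, ?_⟩
  · -- injective
    suffices H : ∀ h, qSum θ q h = 0 → h = 0 by
      intro h₁ h₂ hEq
      have := H (h₁ - h₂) (by rw [qSum_sub hq hadd, hEq, sub_self])
      exact sub_eq_zero.1 this
    intro h h0
    ext m b
    obtain ⟨⟨r, hr⟩, j⟩ := m
    rw [Finsupp.coe_zero, Pi.zero_apply, MvPolynomial.coeff_zero]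
    set a := r + q • b with ha
    have hmoda : nmod q a = r := (divmod_unique hr rfl).1.symm
    have hdiva : ndiv q a = b := (divmod_unique hr rfl).2.symm
    have hco : coeff a (qSum θ q h) = 0 := by rw [h0, MvPolynomial.coeff_zero]
    rw [qSum, Finsupp.sum, coeff_sum] at hco
    have hco2 : ∑ m' ∈ h.support,
        (if m'.1.1 = r then (bK m'.2 : K) * (coeff b (h m')) ^ q else 0) = 0 := by
      refine Eq.trans (Finset.sum_congr rfl fun m' _ => ?_) hco
      rw [hθapp m', coeff_theta_mul hp e hq m'.1.2, hmoda, hdiva]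
    rw [Finset.sum_ite, Finset.sum_const_zero, add_zero] at hco2
    set t : Finset J := (h.support.filter (fun m' => m'.1.1 = r)).image Prod.snd with ht
    have himg : ∑ j' ∈ t, (bK j' : K) * (coeff b (h (⟨r, hr⟩, j'))) ^ q = 0 := by
      rw [ht, Finset.sum_image ?inj]
      case inj =>
        intro x hx y hy hxy
        have hx1 : x.1 = ⟨r, hr⟩ := Subtype.ext (Finset.mem_filter.1 hx).2
        have hy1 : y.1 = ⟨r, hr⟩ := Subtype.ext (Finset.mem_filter.1 hy).2
        exact Prod.ext (hx1.trans hy1.symm) hxy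
      rw [← hco2]
      refine Finset.sum_congr rfl fun m' hm' => ?_
      have hm1 : m'.1 = ⟨r, hr⟩ := Subtype.ext (Finset.mem_filter.1 hm').2
      congr 1
      rw [← hm1]
    set g : J → F := fun j' => if j' ∈ t then ⟨(coeff b (h (⟨r, hr⟩, j'))) ^ q, hmemF _⟩ else 0
      with hg
    have hgz : ∀ j' ∉ t, g j' = 0 := fun j' hj' => by rw [hg]; simp [hj']
    have hgsum : ∑ j' ∈ t, g j' • bK j' = 0 := by
      rw [← himg]
      refine Finset.sum_congr rfl fun j' hj' => ?_
      rw [hg]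
      simp only [hj', if_pos]
      rw [hsmul]
      ring
    have hall := linearIndependent_iff''.1 bK.linearIndependent t g hgz hgsum j
    by_cases hjt : j ∈ t
    · rw [hg] at hall
      simp only [hjt, if_pos] at hall
      have : (coeff b (h (⟨r, hr⟩, j))) ^ q = 0 := congrArg Subtype.val hall
      exact pow_eq_zero_iff hq |>.1 this
    · have : (⟨r, hr⟩, j) ∉ h.support.filter (fun m' => m'.1.1 = r) := by
        intro hmem
        exact hjt (Finset.mem_image.2 ⟨_, hmem, rfl⟩)
      have : (⟨(⟨r, hr⟩ : {r : Fin n →₀ ℕ // ∀ i, r i < q}), j⟩) ∉ h.support := by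
        intro hmem
        exact this (Finset.mem_filter.2 ⟨hmem, rfl⟩)
      rw [Finsupp.notMem_support_iff.1 this, MvPolynomial.coeff_zero]
  · -- surjective
    intro f
    induction f using MvPolynomial.induction_on' with
    | monomial u c =>
      refine ⟨∑ j ∈ (bK.repr c).support,
        Finsupp.single (⟨nmod q u, nmod_lt hq u⟩, j)
          (monomial (ndiv q u) (rt (bK.repr c j))), ?_⟩
      rw [qSum_finset_sum hq hadd]
      have hterm : ∀ j ∈ (bK.repr c).support,
          qSum θ q
            (Finsupp.single (⟨nmod q u, nmod_lt hq u⟩, j)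
              (monomial (ndiv q u) (rt (bK.repr c j))))
          = monomial u ((bK.repr c j : K) * (bK j : K)) := by
        intro j _
        rw [qSum_single hq, hθapp, monomial_pow, monomial_mul, hrtq, nmod_add_smul_ndiv]
        ring_nf
      rw [Finset.sum_congr rfl hterm]
      have : ∑ j ∈ (bK.repr c).support, (monomial u) ((bK.repr c j : K) * (bK j : K))
          = monomial u (∑ j ∈ (bK.repr c).support, (bK.repr c j : K) * (bK j : K)) :=
        (map_sum (monomial u) _ _).symm
      rw [this]
      congr 1
      have hrepr := bK.linearCombination_repr c
      rw [Finsupp.linearCombination_apply, Finsupp.sum] at hrepr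
      calc ∑ j ∈ (bK.repr c).support, (bK.repr c j : K) * (bK j : K)
          = ∑ j ∈ (bK.repr c).support, (bK.repr c j) • bK j :=
            Finset.sum_congr rfl fun j _ => (hsmul _ _).symm
        _ = c := hrepr
    | add f₁ f₂ ih₁ ih₂ =>
      obtain ⟨h₁, rfl⟩ := ih₁
      obtain ⟨h₂, rfl⟩ := ih₂
      exact ⟨h₁ + h₂, qSum_add hq hadd h₁ h₂⟩

end Theta

section Key
open MvPolynomial
universe u
variable {K : Type u} [Field K] {p : ℕ} (hp : p.Prime) [CharP K p] {n α : ℕ} (e : ℕ)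
include hp

theorem key_saturation
    (W : Submodule (MvPolynomial (Fin n) K) (Fin α → MvPolynomial (Fin n) K))
    (c : MvPolynomial (Fin n) K) (v : Fin α → MvPolynomial (Fin n) K)
    (hsat : ∀ u : Fin α → MvPolynomial (Fin n) K, c • u ∈ W → u ∈ W)
    (hv : c • v ∈ bracketPower (p ^ e) W) : v ∈ bracketPower (p ^ e) W := by
  classical
  haveI : Fact p.Prime := ⟨hp⟩
  set q := p ^ e with hqdef
  have hq : q ≠ 0 := pow_ne_zero _ hp.pos.ne'
  have hadd : ∀ a b : MvPolynomial (Fin n) K, (a + b) ^ q = a ^ q + b ^ q := fun a b =>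
    add_pow_char_pow a b p e
  have hv' : (c ^ q) • v ∈ bracketPower q W := by
    have h1 : (c ^ q) • v = c ^ (q - 1) • (c • v) := by
      rw [smul_smul, ← pow_succ, Nat.sub_add_cancel (Nat.one_le_iff_ne_zero.2 hq)]
    rw [h1]
    exact Submodule.smul_mem _ _ hv
  obtain ⟨M, θ, hbij⟩ := exists_qbasis hp e (K := K) (n := n)
  set Φe : (M →₀ MvPolynomial (Fin n) K) ≃ MvPolynomial (Fin n) K :=
    Equiv.ofBijective _ hbij with hΦe
  have hΦe_apply : ∀ h, Φe h = qSum θ q h := fun _ => rfl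
  obtain ⟨N, b, g, hsum⟩ := Submodule.mem_span_set'.1 hv'
  have hmem : ∀ k : Fin N, ∃ w, w ∈ W ∧
      (fun i => w i ^ q) = (g k : Fin α → MvPolynomial (Fin n) K) := fun k => (g k).2
  choose w hwW hwq using hmem
  set u : Fin α → (M →₀ MvPolynomial (Fin n) K) := fun i => Φe.symm (v i) with hu
  have huv : ∀ i, qSum θ q (u i) = v i := fun i => Φe.apply_symm_apply (v i)
  set hc : Fin N → (M →₀ MvPolynomial (Fin n) K) := fun k => Φe.symm (b k) with hhc
  have hbk : ∀ k, qSum θ q (hc k) = b k := fun k => Φe.apply_symm_apply (b k)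
  have hA : ∀ i, c • u i = ∑ k, (w k i) • hc k := by
    intro i
    apply hbij.1
    show qSum θ q _ = qSum θ q _
    rw [qSum_smul hq, huv, qSum_finset_sum hq hadd]
    have hrhs : ∀ k, qSum θ q ((w k i) • hc k) = (w k i) ^ q * b k := fun k => by
      rw [qSum_smul hq, hbk]
    rw [Finset.sum_congr rfl fun k _ => hrhs k]
    have hlhs : c ^ q * v i = ((c ^ q) • v) i := rfl
    rw [hlhs, ← hsum]
    rw [Finset.sum_apply]
    refine Finset.sum_congr rfl fun k _ => ?_
    rw [Pi.smul_apply, smul_eq_mul, ← hwq k]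
    ring
  set y : M → Fin α → MvPolynomial (Fin n) K := fun m i => u i m with hy
  have hyW : ∀ m, y m ∈ W := by
    intro m
    apply hsat
    have hcy : c • y m = ∑ k, (hc k m) • w k := by
      funext i
      rw [Pi.smul_apply, smul_eq_mul]
      have h1 : c * y m i = (c • u i) m := by
        rw [Finsupp.smul_apply, smul_eq_mul]
      rw [Finset.sum_apply]
      rw [h1, hA i, Finsupp.finset_sum_apply]
      refine Finset.sum_congr rfl fun k _ => ?_
      rw [Finsupp.smul_apply, Pi.smul_apply, smul_eq_mul, smul_eq_mul, mul_comm]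
    rw [hcy]
    exact Submodule.sum_mem _ fun k _ => Submodule.smul_mem _ _ (hwW k)
  set T : Finset M := Finset.univ.biUnion (fun i : Fin α => (u i).support) with hT
  have hvT : v = ∑ m ∈ T, θ m • (fun i => (y m i) ^ q) := by
    funext i
    rw [Finset.sum_apply]
    have h2 : ∀ m, (θ m • fun i' : Fin α => y m i' ^ q) i = θ m * (u i) m ^ q := fun m => by
      rw [Pi.smul_apply, smul_eq_mul]
    rw [Finset.sum_congr rfl fun m _ => h2 m]
    rw [← huv i, qSum, Finsupp.sum]
    exact Finset.sum_subset
      (Finset.subset_biUnion_of_mem (fun i' : Fin α => (u i').support) (Finset.mem_univ i))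
      (fun m _ hm => by rw [Finsupp.notMem_support_iff.1 hm, zero_pow hq, mul_zero])
  rw [hvT]
  exact Submodule.sum_mem _ fun m _ => Submodule.smul_mem _ _
    (Submodule.subset_span ⟨y m, hyW m, rfl⟩)

end Key

set_option maxHeartbeats 1000000 in
/-- Let `R = K[x₁,…,xₙ]` with `K` a field of prime characteristic `p`,
`S ⊆ R` a multiplicative set, `V ⊆ R^α` a submodule, and let `L` be the smallest submodule
with `V ⊆ L^{[p^e]}` (`e ≥ 1`).  Then `L·R_S` is the smallest `R_S`-submodule `L'` of
`(R_S)^α` with `V·R_S ⊆ L'^{[p^e]}`; i.e. `I_e(V ⊗_R R_S) = I_e(V) ⊗_R R_S`. -/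
theorem Ie_localization
    {K : Type*} [Field K] {p n α : ℕ} (hp : p.Prime) [CharP K p]
    (S : Submonoid (MvPolynomial (Fin n) K))
    (e : ℕ) (he : 1 ≤ e)
    (V L : Submodule (MvPolynomial (Fin n) K) (Fin α → MvPolynomial (Fin n) K))
    (hL : IsLeast {W : Submodule (MvPolynomial (Fin n) K) (Fin α → MvPolynomial (Fin n) K) |
        V ≤ bracketPower (p ^ e) W} L) :
    IsLeast {L' : Submodule (Localization S) (Fin α → Localization S) |
        extendToLocalization S V ≤ bracketPower (p ^ e) L'}
      (extendToLocalization S L) := by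
  classical
  set q := p ^ e with hqdef
  have hq : q ≠ 0 := pow_ne_zero _ hp.pos.ne'
  set φ : (Fin α → MvPolynomial (Fin n) K) → (Fin α → Localization S) :=
    fun u i => algebraMap (MvPolynomial (Fin n) K) (Localization S) (u i) with hφ
  have hφadd : ∀ u₁ u₂, φ (u₁ + u₂) = φ u₁ + φ u₂ := fun u₁ u₂ => by
    funext i
    exact map_add (algebraMap (MvPolynomial (Fin n) K) (Localization S)) (u₁ i) (u₂ i)
  have hφzero : φ 0 = 0 := by
    funext i
    exact map_zero (algebraMap (MvPolynomial (Fin n) K) (Localization S))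
  have hφsmul : ∀ (a : MvPolynomial (Fin n) K) u,
      φ (a • u) = algebraMap _ (Localization S) a • φ u := fun a u => by
    funext i
    exact map_mul (algebraMap (MvPolynomial (Fin n) K) (Localization S)) a (u i)
  constructor
  · -- membership: extend V ≤ bracketPower q (extend L)
    rw [extendToLocalization, Set.mem_setOf_eq]
    apply Submodule.span_le.2
    rintro x ⟨v, hvV, rfl⟩
    have hvL : v ∈ bracketPower q L := hL.1 hvV
    clear hvV
    show φ v ∈ bracketPower q (extendToLocalization S L)
    induction hvL using Submodule.span_induction with
    | mem x hx =>
      obtain ⟨w, hwL, rfl⟩ := hx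
      have h1 : φ (fun i => w i ^ q) = fun i => (φ w) i ^ q := by
        funext i
        exact map_pow (algebraMap (MvPolynomial (Fin n) K) (Localization S)) (w i) q
      rw [h1]
      exact Submodule.subset_span ⟨φ w, Submodule.subset_span ⟨w, hwL, rfl⟩, rfl⟩
    | zero => rw [hφzero]; exact Submodule.zero_mem _
    | add x y hx hy ihx ihy => rw [hφadd]; exact Submodule.add_mem _ ihx ihy
    | smul a x hx ih => rw [hφsmul]; exact Submodule.smul_mem _ _ ih
  · -- lower bound
    intro L' hL'
    set W : Submodule (MvPolynomial (Fin n) K) (Fin α → MvPolynomial (Fin n) K) :=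
      { carrier := {u | φ u ∈ L'}
        zero_mem' := by rw [Set.mem_setOf_eq, hφzero]; exact L'.zero_mem
        add_mem' := fun {u₁} {u₂} h1 h2 => by
          rw [Set.mem_setOf_eq, hφadd]; exact L'.add_mem h1 h2
        smul_mem' := fun a u h => by
          rw [Set.mem_setOf_eq, hφsmul]; exact L'.smul_mem _ h } with hW
    have hWmem : ∀ u, u ∈ W ↔ φ u ∈ L' := fun u => Iff.rfl
    have hWsat : ∀ c ∈ S, ∀ u, c • u ∈ W → u ∈ W := by
      intro c hc u hcu
      rw [hWmem] at hcu ⊢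
      rw [hφsmul] at hcu
      have hunit : IsUnit (algebraMap (MvPolynomial (Fin n) K) (Localization S) c) :=
        IsLocalization.map_units (Localization S) ⟨c, hc⟩
      have h2 := L'.smul_mem ((hunit.unit⁻¹ : _) : Localization S) hcu
      rwa [smul_smul, IsUnit.val_inv_mul, one_smul] at h2
    have hVW : V ≤ bracketPower q W := by
      intro v hv
      have h1 : φ v ∈ bracketPower q L' := hL' (Submodule.subset_span ⟨v, hv, rfl⟩)
      -- clear denominators
      have hP : ∀ x, x ∈ bracketPower q L' → ∃ c ∈ S, ∃ y,
          y ∈ bracketPower q W ∧ φ y = algebraMap _ (Localization S) c • x := by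
        intro x hx
        induction hx using Submodule.span_induction with
        | mem x hx =>
          obtain ⟨w, hwL', rfl⟩ := hx
          obtain ⟨d, hd⟩ := IsLocalization.exist_integer_multiples S Finset.univ w
          choose uu huu using fun i => hd i (Finset.mem_univ i)
          have huuW : uu ∈ W := by
            rw [hWmem]
            have : φ uu = algebraMap _ (Localization S) (d : MvPolynomial (Fin n) K) • w := by
              funext i
              rw [hφ]
              simp only [Pi.smul_apply]
              rw [huu i, Algebra.smul_def, smul_eq_mul]
            rw [this]
            exact L'.smul_mem _ hwL'
          refine ⟨(d : MvPolynomial (Fin n) K) ^ q, S.pow_mem d.2 q,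
            (fun i => uu i ^ q), Submodule.subset_span ⟨uu, huuW, rfl⟩, ?_⟩
          funext i
          rw [hφ]
          simp only [Pi.smul_apply, smul_eq_mul]
          rw [map_pow, map_pow, ← mul_pow]
          congr 1
          have := huu i
          rw [Algebra.smul_def] at this
          rw [← this]
        | zero => exact ⟨1, S.one_mem, 0, Submodule.zero_mem _, by rw [hφzero, smul_zero]⟩
        | add x₁ x₂ hm₁ hm₂ ih₁ ih₂ =>
          obtain ⟨c₁, hc₁, y₁, hy₁, hEq₁⟩ := ih₁
          obtain ⟨c₂, hc₂, y₂, hy₂, hEq₂⟩ := ih₂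
          refine ⟨c₁ * c₂, S.mul_mem hc₁ hc₂, c₂ • y₁ + c₁ • y₂,
            Submodule.add_mem _ (Submodule.smul_mem _ _ hy₁) (Submodule.smul_mem _ _ hy₂), ?_⟩
          rw [hφadd, hφsmul, hφsmul, hEq₁, hEq₂, smul_add, map_mul]
          rw [smul_smul, smul_smul, mul_comm]
        | smul a x hm ih =>
          obtain ⟨c, hc, y, hy, hEq⟩ := ih
          obtain ⟨⟨r, s⟩, hrs⟩ := IsLocalization.surj S a
          refine ⟨(s : MvPolynomial (Fin n) K) * c, S.mul_mem s.2 hc, r • y,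
            Submodule.smul_mem _ _ hy, ?_⟩
          rw [hφsmul, hEq, map_mul, smul_smul, smul_smul]
          congr 1
          rw [← hrs]
          ring
      obtain ⟨c, hc, y, hy, hEq⟩ := hP (φ v) h1
      have hyv : φ y = φ (c • v) := by rw [hEq, hφsmul]
      -- kernel of localization
      have hker : ∀ i : Fin α, ∃ t : S, (t : MvPolynomial (Fin n) K) * y i
          = (t : MvPolynomial (Fin n) K) * (c • v) i := by
        intro i
        have : algebraMap (MvPolynomial (Fin n) K) (Localization S) (y i)
            = algebraMap _ _ ((c • v) i) := congrFun hyv i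
        obtain ⟨t, ht⟩ := (IsLocalization.eq_iff_exists S (Localization S)).1 this
        exact ⟨t, ht⟩
      choose t ht using hker
      set d : S := ∏ i, t i with hd
      have hdy : d.1 • y = d.1 • (c • v) := by
        funext i
        show (d : MvPolynomial (Fin n) K) * y i = (d : MvPolynomial (Fin n) K) * (c • v) i
        have h1 : t i * (∏ j ∈ Finset.univ.erase i, t j) = d :=
          Finset.mul_prod_erase Finset.univ t (Finset.mem_univ i)
        have hsplit : ((∏ j ∈ Finset.univ.erase i, t j : ↥S) : MvPolynomial (Fin n) K)
            * (t i : MvPolynomial (Fin n) K) = (d : MvPolynomial (Fin n) K) := by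
          rw [← h1, Submonoid.coe_mul, mul_comm]
        rw [← hsplit, mul_assoc, ht i, ← mul_assoc]
      have hfinal : ((d : MvPolynomial (Fin n) K) * c) • v ∈ bracketPower q W := by
        have : ((d : MvPolynomial (Fin n) K) * c) • v = d.1 • (c • v) := by
          rw [smul_smul]
        rw [this, ← hdy]
        exact Submodule.smul_mem _ _ hy
      exact key_saturation hp e W _ v
        (hWsat _ (S.mul_mem d.2 hc)) hfinal
    have hLW : L ≤ W := hL.2 hVW
    rw [extendToLocalization]
    apply Submodule.span_le.2
    rintro x ⟨u, huL, rfl⟩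
    exact (hWmem u).1 (hLW huL)
end
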